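/- For θ > 0 and c0 > c1 > 0, the derivative of J satisfies: for every s ∈ ℂ ∖ [−1, 0], J′(s) = 0 if and only if s = s_a or s = s_b. Moreover s_a and s_b are real and satisfy s_a < −1 and s_b > 1/θ. -/

import Mathlib

/-!
Away from `[−1, 0]` the base `(s+1)/s` lies in the slit plane, so the chain rule gives
`J′(s) = ((s+1)/s)^(1/θ − 1) · c1 (s − s_a)(s − s_b) / s²`: the numerator
`c1 s(s+1) − (c1 s + c0)/θ` is `c1/θ` times `θ s² − (1 − θ) s − c0/c1`, whose roots are
`s_a, s_b`, and the power factor never vanishes. Both bounds on the roots reduce to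
`1 + θ < √(4θ·c0/c1 + (1−θ)²)`, i.e. to `c0 > c1`.
-/

/-- The complex map `J(s; c0, c1) = (c1*s + c0) * ((s+1)/s)^(1/θ)`, analytic on
`ℂ ∖ [−1, 0]`, using the principal branch of the complex power. Since
`(s+1)/s ∉ (−∞, 0]` for `s ∉ [−1, 0]`, this is the branch with
`J(s) = c1·s·(1 + O(1/s))` as `s → ∞`. -/
noncomputable def JmapC (θ c0 c1 : ℝ) (s : ℂ) : ℂ :=
  ((c1 : ℂ) * s + (c0 : ℂ)) * ((s + 1) / s) ^ (((1 / θ : ℝ)) : ℂ)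

/-- The segment `[−1, 0]` viewed as a subset of `ℂ`. -/
def seg : Set ℂ := {z : ℂ | z.im = 0 ∧ -1 ≤ z.re ∧ z.re ≤ 0}

/-- `s_a = (1−θ)/(2θ) − (1/(2θ))·√(4θ·(c0/c1) + (1−θ)²)`. -/
noncomputable def sA (θ r : ℝ) : ℝ :=
  (1 - θ) / (2 * θ) - 1 / (2 * θ) * Real.sqrt (4 * θ * r + (1 - θ) ^ 2)

/-- `s_b = (1−θ)/(2θ) + (1/(2θ))·√(4θ·(c0/c1) + (1−θ)²)`. -/
noncomputable def sB (θ r : ℝ) : ℝ :=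
  (1 - θ) / (2 * θ) + 1 / (2 * θ) * Real.sqrt (4 * θ * r + (1 - θ) ^ 2)

open Complex

section Roots

variable {θ r : ℝ}

lemma sA_add_sB (hθ : θ ≠ 0) : sA θ r + sB θ r = (1 - θ) / θ := by
  unfold sA sB
  field_simp
  ring

lemma sA_mul_sB (hθ : θ ≠ 0) (hD : 0 ≤ 4 * θ * r + (1 - θ) ^ 2) :
    sA θ r * sB θ r = -r / θ := by
  have hsq := Real.sq_sqrt hD
  unfold sA sB
  set d := √(4 * θ * r + (1 - θ) ^ 2)
  field_simp
  linear_combination (-1 : ℝ) * hsq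

lemma one_add_lt_sqrt_disc (hθ : 0 < θ) (hr : 1 < r) :
    1 + θ < √(4 * θ * r + (1 - θ) ^ 2) :=
  Real.lt_sqrt (by positivity) |>.mpr (by nlinarith)

lemma sA_lt_neg_one (hθ : 0 < θ) (hr : 1 < r) : sA θ r < -1 := by
  have hd := one_add_lt_sqrt_disc hθ hr
  unfold sA
  set d := √(4 * θ * r + (1 - θ) ^ 2)
  rw [← sub_neg, ← neg_neg (1 : ℝ)]
  field_simp
  linarith

lemma one_div_lt_sB (hθ : 0 < θ) (hr : 1 < r) : 1 / θ < sB θ r := by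
  have hd := one_add_lt_sqrt_disc hθ hr
  unfold sB
  set d := √(4 * θ * r + (1 - θ) ^ 2)
  rw [← sub_pos]
  field_simp
  linarith

end Roots

lemma add_one_div_mem_slitPlane {s : ℂ} (hs : s ∉ seg) : (s + 1) / s ∈ slitPlane := by
  rw [mem_slitPlane_iff]
  by_cases him : s.im = 0
  · left
    have hre : s.re < -1 ∨ 0 < s.re := by
      by_contra! h
      exact hs ⟨him, by linarith [h.1], h.2⟩
    have hs_real : s = (s.re : ℂ) := ext rfl (by simp [him])
    rw [hs_real, ← ofReal_one, ← ofReal_add, ← ofReal_div, ofReal_re]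
    rcases hre with h | h
    · exact div_pos_of_neg_of_neg (by linarith) (by linarith)
    · exact div_pos (by linarith) h
  · right
    have hs0 : s ≠ 0 := fun h => him (by simp [h])
    rw [add_div, div_self hs0, add_im, one_im, zero_add, div_im]
    simp [him, hs0]

lemma hasDerivAt_mul_add_one_div_cpow {a b c s : ℂ} (hs : (s + 1) / s ∈ slitPlane) :
    HasDerivAt (fun z => (b * z + c) * ((z + 1) / z) ^ a)
      (((s + 1) / s) ^ (a - 1) * (b * (s + 1) * s - a * (b * s + c)) / s ^ 2) s := by
  have hs0 : s ≠ 0 := by rintro rfl; simp at hs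
  have hw0 : (s + 1) / s ≠ 0 := slitPlane_ne_zero hs
  have hquot : HasDerivAt (fun z : ℂ => (z + 1) / z) ((1 * s - (s + 1) * 1) / s ^ 2) s :=
    ((hasDerivAt_id s).add_const 1).div (hasDerivAt_id s) hs0
  have hlin : HasDerivAt (fun z : ℂ => b * z + c) b s := by
    simpa using ((hasDerivAt_id s).const_mul b).add_const c
  refine (hlin.mul (hquot.cpow_const hs)).congr_deriv ?_
  rw [show ((s + 1) / s) ^ a = ((s + 1) / s) ^ (a - 1) * ((s + 1) / s) by
    rw [cpow_sub _ _ hw0, cpow_one, div_mul_cancel₀ _ hw0]]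
  field_simp
  ring

lemma add_one_mul_self_sub_eq_sub_sA_mul_sub_sB {θ r : ℝ} (hθ : θ ≠ 0) (hD : 0 ≤ 4 * θ * r + (1 - θ) ^ 2) (s : ℂ) :
    (s + 1) * s - ((1 / θ : ℝ) : ℂ) * (s + r) = (s - sA θ r) * (s - sB θ r) := by
  have hsum : ((sA θ r + sB θ r : ℝ) : ℂ) = ((1 - θ) / θ : ℝ) := congrArg _ (sA_add_sB hθ)
  have hprod : ((sA θ r * sB θ r : ℝ) : ℂ) = (-r / θ : ℝ) := congrArg _ (sA_mul_sB hθ hD)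
  have hθC : (θ : ℂ) ≠ 0 := ofReal_ne_zero.mpr hθ
  push_cast at hsum hprod ⊢
  field_simp at hsum hprod ⊢
  linear_combination s * hsum - hprod

/-- For `θ > 0` and `c0 > c1 > 0`: `s_a < −1`, `s_b > 1/θ`, and for every
`s ∈ ℂ ∖ [−1, 0]`, `J′(s) = 0` iff `s = s_a` or `s = s_b`. -/
theorem stmt2 (θ c0 c1 : ℝ) (hθ : 0 < θ) (hc1 : 0 < c1) (hc01 : c1 < c0) :
    (sA θ (c0 / c1) < -1 ∧ 1 / θ < sB θ (c0 / c1)) ∧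
    ∀ s : ℂ, s ∉ seg →
      (deriv (JmapC θ c0 c1) s = 0 ↔
        s = ((sA θ (c0 / c1) : ℝ) : ℂ) ∨ s = ((sB θ (c0 / c1) : ℝ) : ℂ)) := by
  have hr : 1 < c0 / c1 := (one_lt_div hc1).mpr hc01
  refine ⟨⟨sA_lt_neg_one hθ hr, one_div_lt_sB hθ hr⟩, fun s hs => ?_⟩
  have hslit := add_one_div_mem_slitPlane hs
  have hs0 : s ≠ 0 := by rintro rfl; simp at hslit
  have hc1C : (c1 : ℂ) ≠ 0 := ofReal_ne_zero.mpr hc1.ne'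
  have hJ : HasDerivAt (JmapC θ c0 c1) _ s := hasDerivAt_mul_add_one_div_cpow hslit
  have hnum : (c1 : ℂ) * (s + 1) * s - ((1 / θ : ℝ) : ℂ) * (c1 * s + c0) =
      c1 * ((s - sA θ (c0 / c1)) * (s - sB θ (c0 / c1))) := by
    rw [← add_one_mul_self_sub_eq_sub_sA_mul_sub_sB hθ.ne' (by positivity)]
    push_cast
    field_simp
  rw [hJ.deriv, hnum]
  simp [hs0, hc1C, slitPlane_ne_zero hslit, sub_eq_zero]
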